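/- Let μ be a Borel probability measure on C([0,1]) with support Γ, and let ν be a μ-invariant Borel probability measure on [0,1]. If for every x ∈ (0,1] there exists g ∈ Γ with g(x) < x, then 0 belongs to the support of ν. -/

import Mathlib

open MeasureTheory

/-- The topological support of a Borel measure. -/
def msupport {X : Type*} [TopologicalSpace X] [MeasurableSpace X] (μ : Measure X) : Set X :=
  {x | ∀ U : Set X, IsOpen U → x ∈ U → 0 < μ U}

/-! The support of a `μ`-stationary measure `ν` is mapped into itself by every `g ∈ supp μ`:
evaluation is jointly continuous, so maps near `g` send points near `x ∈ supp ν` into any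
neighbourhood `U` of `g x`, and stationarity gives
`ν U ≥ μ(maps near g) · ν(points near x) > 0`.
If `0 ∉ supp ν`, the least point `m` of the nonempty compact set `supp ν` is positive, and a
map `g ∈ supp μ` with `g m < m` produces a smaller point `g m` of `supp ν`. -/

theorem msupport_eq_support {X : Type*} [TopologicalSpace X] [MeasurableSpace X]
    (μ : Measure X) : msupport μ = μ.support := by
  ext x
  simp only [msupport, Measure.support_eq_forall_isOpen, Set.mem_ofPred_eq]
  exact forall_congr' fun U ↦ Imp.swap

theorem apply_mem_support_of_stationary {F X : Type*}
    [TopologicalSpace F] [MeasurableSpace F] [OpensMeasurableSpace F]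
    [TopologicalSpace X] [MeasurableSpace X] [OpensMeasurableSpace X]
    [FunLike F X X] [ContinuousEval F X X] {μ : Measure F} {ν : Measure X}
    (hinv : ∀ A : Set X, MeasurableSet A → ν A = ∫⁻ g, ν (g ⁻¹' A) ∂μ)
    {g₀ : F} (hg₀ : g₀ ∈ μ.support) {x : X} (hx : x ∈ ν.support) :
    g₀ x ∈ ν.support := by
  rw [Measure.support_eq_forall_isOpen] at hg₀ hx ⊢
  intro U hxU hU
  obtain ⟨V, W, hV, hW, hg₀V, hxW, hVW⟩ :=
    isOpen_prod_iff.mp (hU.preimage continuous_eval) g₀ x hxU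
  calc 0 < ν W * μ V := ENNReal.mul_pos (hx W hxW hW).ne' (hg₀ V hg₀V hV).ne'
    _ = ∫⁻ g, V.indicator (fun _ ↦ ν W) g ∂μ :=
      (lintegral_indicator_const hV.measurableSet _).symm
    _ ≤ ∫⁻ g, ν (g ⁻¹' U) ∂μ :=
      lintegral_mono <| Set.indicator_le fun g hg ↦
        measure_mono fun y hy ↦ hVW (Set.mk_mem_prod hg hy)
    _ = ν U := (hinv U hU.measurableSet).symm

theorem stmt_5_general {mC : MeasurableSpace C(unitInterval, unitInterval)}
    [BorelSpace C(unitInterval, unitInterval)]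
    (μ : Measure C(unitInterval, unitInterval))
    (ν : Measure unitInterval) [IsProbabilityMeasure ν]
    (hinv : ∀ A : Set unitInterval, MeasurableSet A →
      ν A = ∫⁻ g, ν ((g : unitInterval → unitInterval) ⁻¹' A) ∂μ)
    (hdec : ∀ x : unitInterval, 0 < x →
      ∃ g ∈ msupport μ, (g : unitInterval → unitInterval) x < x) :
    (0 : unitInterval) ∈ msupport ν := by
  simp only [msupport_eq_support] at hdec ⊢
  obtain ⟨m, hm, hleast⟩ :=
    ν.isClosed_support.isCompact.exists_isLeast (Measure.nonempty_support (NeZero.ne ν))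
  by_contra h0
  have hm_pos : 0 < m := unitInterval.pos_iff_ne_zero.mpr fun h ↦ h0 (h ▸ hm)
  obtain ⟨g, hg, hgm⟩ := hdec m hm_pos
  exact hgm.not_ge (hleast (apply_mem_support_of_stationary hinv hg hm))

/-- Let `μ` be a Borel probability measure on `C([0,1])` with support `Γ` and let `ν`
be a `μ`-invariant Borel probability measure on `[0,1]`. If for every `x ∈ (0,1]` there
is `g ∈ Γ` with `g(x) < x`, then `0 ∈ supp ν`. -/
theorem stmt_5 {mC : MeasurableSpace C(unitInterval, unitInterval)}
    [BorelSpace C(unitInterval, unitInterval)]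
    (μ : Measure C(unitInterval, unitInterval)) [IsProbabilityMeasure μ]
    (ν : Measure unitInterval) [IsProbabilityMeasure ν]
    (hinv : ∀ A : Set unitInterval, MeasurableSet A →
      ν A = ∫⁻ g, ν ((g : unitInterval → unitInterval) ⁻¹' A) ∂μ)
    (hdec : ∀ x : unitInterval, 0 < x →
      ∃ g ∈ msupport μ, (g : unitInterval → unitInterval) x < x) :
    (0 : unitInterval) ∈ msupport ν :=
  stmt_5_general (mC := mC) μ ν hinv hdec
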